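/- arXiv:1101.3624 — 3 statements merged into one kernel-verified Lean document; each statement's English description precedes it below -/
import Mathlib

section
/- For n ≥ 3, let G = K_{n,n} minus a perfect matching with parts {x_1,...,x_n}, {y_1,...,y_n} and edges x_i y_j for i ≠ j. Then W = {x_1, ..., x_{n-1}} is a resolving set of G. -/
/-- `W` resolves `G`: every vertex is determined by its distance vector to `W`. -/
def Resolves {V : Type*} (G : SimpleGraph V) (W : Set V) : Prop :=
  ∀ u v : V, (∀ w ∈ W, G.dist u w = G.dist v w) → u = v

/-- Metric dimension: minimum cardinality of a (finite) resolving set. -/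
noncomputable def metricDim {V : Type*} (G : SimpleGraph V) : ℕ :=
  sInf {k | ∃ W : Set V, W.Finite ∧ W.ncard = k ∧ Resolves G W}

/-- `K_{n,n}` minus a perfect matching: parts `inl i` (the xᵢ) and `inr j` (the yⱼ),
with `xᵢ ~ yⱼ` iff `i ≠ j`. -/
def matchGraph (n : ℕ) : SimpleGraph (Fin n ⊕ Fin n) where
  Adj u v := match u, v with
    | Sum.inl i, Sum.inr j => i ≠ j
    | Sum.inr j, Sum.inl i => i ≠ j
    | _, _ => False
  symm := ⟨by rintro (i|i) (j|j) h <;> exact h⟩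
  loopless := ⟨by rintro (i|i) h <;> exact h⟩

/-!
Seen from `x_k`, every `x_i ≠ x_k` lies at distance `2`, every `y_j` with `j ≠ k` at distance `1`,
and `y_k` at distance `3` (the paths realising `2` and `3` need a third index, hence `n ≥ 3`). So
the parity of the distance to `x_0` tells the two sides apart, and two distinct vertices on the same
side have distinct indices, one of which is `< n - 1`: the corresponding `x_k ∈ W` separates them.
-/

open SimpleGraph

namespace matchGraph

variable {n : ℕ}

@[simp] lemma adj_inl_inl (i j : Fin n) : ¬(matchGraph n).Adj (.inl i) (.inl j) := id

@[simp] lemma adj_inr_inr (i j : Fin n) : ¬(matchGraph n).Adj (.inr i) (.inr j) := id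

@[simp] lemma adj_inl_inr {i j : Fin n} : (matchGraph n).Adj (.inl i) (.inr j) ↔ i ≠ j := .rfl

@[simp] lemma adj_inr_inl {i j : Fin n} : (matchGraph n).Adj (.inr j) (.inl i) ↔ i ≠ j := .rfl

lemma dist_inl_inl (hn : 3 ≤ n) (i k : Fin n) :
    (matchGraph n).dist (.inl i) (.inl k) = if i = k then 0 else 2 := by
  split_ifs with hik
  · simp [hik]
  obtain ⟨m, hmi, hmk⟩ := Fin.exists_ne_and_ne_of_two_lt i k (by omega)
  let p : (matchGraph n).Walk (.inl i) (.inl k) :=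
    .cons (adj_inl_inr.mpr hmi.symm) (.cons (adj_inr_inl.mpr hmk.symm) .nil)
  refine le_antisymm (dist_le p) ?_
  exact p.reachable.one_lt_dist_of_ne_of_not_adj (by simpa using hik) (adj_inl_inl i k)

lemma commonNeighbors_inr_inl (k : Fin n) :
    (matchGraph n).commonNeighbors (.inr k) (.inl k) = ∅ := by
  ext (v | v) <;> simp [mem_commonNeighbors]

lemma dist_inr_inl (hn : 3 ≤ n) (j k : Fin n) :
    (matchGraph n).dist (.inr j) (.inl k) = if j = k then 3 else 1 := by
  split_ifs with hjk
  swap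
  · exact dist_eq_one_iff_adj.mpr (adj_inr_inl.mpr (Ne.symm hjk))
  subst hjk
  obtain ⟨m, hmj, -⟩ := Fin.exists_ne_and_ne_of_two_lt j j (by omega)
  obtain ⟨l, hlj, hlm⟩ := Fin.exists_ne_and_ne_of_two_lt j m (by omega)
  let p : (matchGraph n).Walk (.inr j) (.inl j) :=
    .cons (adj_inr_inl.mpr hmj) <|
      .cons (adj_inl_inr.mpr hlm.symm) <| .cons (adj_inr_inl.mpr hlj.symm) .nil
  have hlt : 2 < (matchGraph n).edist (.inr j) (.inl j) :=
    two_lt_edist_iff.mpr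
      ⟨Sum.inr_ne_inl, adj_inr_inl.not.mpr (· rfl), commonNeighbors_inr_inl j⟩
  rw [← p.reachable.coe_dist_eq_edist] at hlt
  exact le_antisymm (dist_le p) (by exact_mod_cast hlt)

end matchGraph

lemma Fin.val_lt_sub_one_or_of_ne {n : ℕ} {i j : Fin n} (hij : i ≠ j) :
    (i : ℕ) < n - 1 ∨ (j : ℕ) < n - 1 := by
  have := Fin.val_ne_of_ne hij
  omega

/-- `W = {x₁, …, x_{n-1}}` (0-indexed: `inl i` for `i < n-1`)
is a resolving set of `K_{n,n}` minus a perfect matching. -/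
theorem stmt2 (n : ℕ) (hn : 3 ≤ n) :
    Resolves (matchGraph n) {u | ∃ i : Fin n, (i : ℕ) < n - 1 ∧ u = Sum.inl i} := by
  intro u v h
  have hdist : ∀ k : Fin n, (k : ℕ) < n - 1 →
      (matchGraph n).dist u (.inl k) = (matchGraph n).dist v (.inl k) :=
    fun k hk => h _ ⟨k, hk, rfl⟩
  have hdist₀ := hdist ⟨0, by omega⟩ (show 0 < n - 1 by omega)
  rcases u with i | i <;> rcases v with j | j <;>
    simp only [matchGraph.dist_inl_inl hn, matchGraph.dist_inr_inl hn, Sum.inl.injEq,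
      Sum.inr.injEq] at hdist hdist₀ ⊢
  · by_contra hij
    rcases Fin.val_lt_sub_one_or_of_ne hij with hk | hk <;> have := hdist _ hk <;> grind
  · grind
  · grind
  · by_contra hij
    rcases Fin.val_lt_sub_one_or_of_ne hij with hk | hk <;> have := hdist _ hk <;> grind
end

section
/- For n ≥ 3, let G = K_{n,n} minus a perfect matching. Every resolving set of G contains at least n-1 vertices. -/
namespace SimpleGraph

variable {V V' : Type*} {G : SimpleGraph V} {G' : SimpleGraph V'}

lemma edist_map_le (f : G →g G') (u v : V) : G'.edist (f u) (f v) ≤ G.edist u v := by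
  by_cases h : G.Reachable u v
  · obtain ⟨p, hp⟩ := h.exists_walk_length_eq_edist
    calc G'.edist (f u) (f v) ≤ (p.map f).length := edist_le _
      _ = G.edist u v := by rw [Walk.length_map, hp]
  · rw [edist_eq_top_of_not_reachable h]
    exact le_top

lemma Iso.edist_eq (σ : G ≃g G') (u v : V) : G'.edist (σ u) (σ v) = G.edist u v :=
  le_antisymm (edist_map_le σ.toHom u v) (by simpa using edist_map_le σ.symm.toHom (σ u) (σ v))

lemma Iso.dist_eq (σ : G ≃g G') (u v : V) : G'.dist (σ u) (σ v) = G.dist u v := by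
  simp only [dist, σ.edist_eq]

end SimpleGraph

lemma Resolves.iso_apply_eq_self {V : Type*} {G : SimpleGraph V} {W : Set V} (hW : Resolves G W)
    (σ : G ≃g G) (hσ : ∀ w ∈ W, σ w = w) (v : V) : σ v = v :=
  hW _ _ fun w hw => by simpa [hσ w hw] using σ.dist_eq v w

namespace matchGraph

variable {n : ℕ}

def index : Fin n ⊕ Fin n → Fin n := Sum.elim id id

def permIso (π : Equiv.Perm (Fin n)) : matchGraph n ≃g matchGraph n where
  toEquiv := Equiv.sumCongr π π
  map_rel_iff' := by rintro (i | i) (j | j) <;> simp [matchGraph]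

lemma permIso_apply_eq_self {π : Equiv.Perm (Fin n)} {v : Fin n ⊕ Fin n}
    (h : π (index v) = index v) : permIso π v = v := by
  rcases v with i | i <;> simpa [permIso, index] using h

lemma subsingleton_compl_image_index {W : Set (Fin n ⊕ Fin n)} (hW : Resolves (matchGraph n) W) :
    (index '' W)ᶜ.Subsingleton := by
  intro i hi j hj
  have hfix : ∀ w ∈ W, permIso (Equiv.swap i j) w = w := fun w hw =>
    permIso_apply_eq_self <| Equiv.swap_apply_of_ne_of_ne
      (fun h => hi ⟨w, hw, h⟩) (fun h => hj ⟨w, hw, h⟩)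
  simpa [permIso] using (hW.iso_apply_eq_self _ hfix (Sum.inl i)).symm

end matchGraph

theorem stmt3_general (n : ℕ) (W : Set (Fin n ⊕ Fin n))
    (hW : Resolves (matchGraph n) W) : n - 1 ≤ W.ncard := by
  set I := matchGraph.index '' W
  have hcompl : Iᶜ.ncard ≤ 1 :=
    Set.ncard_le_one_iff_subsingleton.mpr (matchGraph.subsingleton_compl_image_index hW)
  have hsum : I.ncard + Iᶜ.ncard = n := by
    rw [Set.ncard_add_ncard_compl]
    simp
  have himage : I.ncard ≤ W.ncard := Set.ncard_image_le W.toFinite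
  omega

/-- every resolving set of `K_{n,n}` minus a perfect matching
has at least `n - 1` vertices. -/
theorem stmt3 (n : ℕ) (hn : 3 ≤ n) (W : Set (Fin n ⊕ Fin n))
    (hW : Resolves (matchGraph n) W) : n - 1 ≤ W.ncard :=
  stmt3_general n W hW
end

section
/- For n ≥ 5, let G be an (n-2)-regular bipartite graph G(n,n) containing the subgraph G' = K_{4,4} \ E(C_8) (on 8 of its vertices, with distances taken in G). Then the minimum number of vertices of G' in any resolving set of G is 3: the set {x_1, x_2, x_3} works, and no 2-subset of V(G') suffices. -/
/-- `G` is a bipartite graph on parts `{inl i}`, `{inr j}` (each of size `n`)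
which is `k`-regular. -/
def IsRegBipartite (n k : ℕ) (G : SimpleGraph (Fin n ⊕ Fin n)) : Prop :=
  (∀ i j : Fin n, ¬ G.Adj (Sum.inl i) (Sum.inl j) ∧ ¬ G.Adj (Sum.inr i) (Sum.inr j)) ∧
  (∀ v, (G.neighborSet v).ncard = k)

/-- The vertices `x (0), y (0), x (1), y (1), …, x (m-1), y (m-1)` form one of the
even cycles removed from `K_{n,n}` to obtain `G`; i.e. inside `G` these `2m`
vertices induce `K_{m,m} \ E(C_{2m})` (cycle edges `xᵢ yᵢ` and `yᵢ x_{i+1 mod m}`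
are absent, all other cross pairs among them are edges). -/
def IsRemovedCycle {n : ℕ} (G : SimpleGraph (Fin n ⊕ Fin n)) (m : ℕ)
    (x y : Fin m → Fin n) : Prop :=
  Function.Injective x ∧ Function.Injective y ∧
  ∀ i j : Fin m,
    (G.Adj (Sum.inl (x i)) (Sum.inr (y j)) ↔ (j ≠ i ∧ (i : ℕ) ≠ ((j : ℕ) + 1) % m))

/-- The vertex set of the subgraph `G'` determined by the removed cycle `x, y`. -/
def cycVerts {n m : ℕ} (x y : Fin m → Fin n) : Set (Fin n ⊕ Fin n) :=
  {v | (∃ i, v = Sum.inl (x i)) ∨ (∃ i, v = Sum.inr (y i))}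

/-- `S` resolves the vertices of `A` within `G` (distances taken in `G`). -/
def ResolvesWithin {V : Type*} (G : SimpleGraph V) (A S : Set V) : Prop :=
  ∀ u ∈ A, ∀ v ∈ A, (∀ w ∈ S, G.dist u w = G.dist v w) → u = v

/-!
Since `2 (n - 2) > n`, any two vertices in the same part of `G` have a common neighbour, so
distances in `G` are `0`, `1`, `2` or `3` according as the vertices are equal, adjacent, in the
same part, or none of these. Every vertex of `G'` already has its two non-neighbours of the other
part inside `G'`, so a vertex outside `G'` is adjacent to all vertices of `G'` in the other part
and at distance `2` from those in its own part: it never separates two vertices of `G'` lying in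
the same part. Everything is thus reduced to the distance table of `K_{4,4} \ E(C₈)`, in which
`x₀, x₁, x₂` separate all eight vertices while any two landmarks leave some pair in one part
unseparated.
-/

namespace IsRegBipartite

variable {n k : ℕ} {G : SimpleGraph (Fin n ⊕ Fin n)}

lemma isLeft_ne_of_adj (hG : IsRegBipartite n k G) {u v : Fin n ⊕ Fin n} (h : G.Adj u v) :
    u.isLeft ≠ v.isLeft := by
  rcases u with a | a <;> rcases v with b | b
  exacts [absurd h (hG.1 a b).1, by simp, by simp, absurd h (hG.1 a b).2]

lemma ncard_setOf_isLeft_ne (u : Fin n ⊕ Fin n) :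
    {w : Fin n ⊕ Fin n | w.isLeft ≠ u.isLeft}.ncard = n := by
  rcases u with a | a
  · simpa [← Set.range_inr] using
      Set.ncard_range_of_injective (@Sum.inr_injective (Fin n) (Fin n))
  · simpa [← Set.range_inl] using
      Set.ncard_range_of_injective (@Sum.inl_injective (Fin n) (Fin n))

lemma neighborSet_subset (hG : IsRegBipartite n k G) (u : Fin n ⊕ Fin n) :
    G.neighborSet u ⊆ {w | w.isLeft ≠ u.isLeft} :=
  fun _ h => (hG.isLeft_ne_of_adj h).symm

lemma commonNeighbors_nonempty (hG : IsRegBipartite n k G) (hk : n < 2 * k)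
    {u v : Fin n ⊕ Fin n} (h : u.isLeft = v.isLeft) : (G.commonNeighbors u v).Nonempty := by
  have hunion : (G.neighborSet u ∪ G.neighborSet v).ncard ≤ n :=
    calc _ ≤ {w : Fin n ⊕ Fin n | w.isLeft ≠ u.isLeft}.ncard :=
          Set.ncard_le_ncard (Set.union_subset (hG.neighborSet_subset u)
            (h ▸ hG.neighborSet_subset v))
      _ = n := ncard_setOf_isLeft_ne u
  have hsum := Set.ncard_inter_add_ncard_union (G.neighborSet u) (G.neighborSet v)
  rw [hG.2 u, hG.2 v] at hsum
  exact Set.nonempty_of_ncard_ne_zero (by rw [SimpleGraph.commonNeighbors]; omega)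

lemma dist_eq_two (hG : IsRegBipartite n k G) (hk : n < 2 * k) {u v : Fin n ⊕ Fin n}
    (h : u.isLeft = v.isLeft) (hne : u ≠ v) : G.dist u v = 2 := by
  have hnadj : ¬ G.Adj u v := fun hadj => hG.isLeft_ne_of_adj hadj h
  have hedist := SimpleGraph.edist_eq_two_iff.mpr ⟨hne, hnadj, hG.commonNeighbors_nonempty hk h⟩
  have hreach : G.Reachable u v := SimpleGraph.reachable_of_edist_ne_top (by simp [hedist])
  exact_mod_cast hreach.coe_dist_eq_edist.trans hedist

lemma dist_eq_three (hG : IsRegBipartite n k G) (hk : n < 2 * k) {u v : Fin n ⊕ Fin n}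
    (h : u.isLeft ≠ v.isLeft) (hnadj : ¬ G.Adj u v) : G.dist u v = 3 := by
  obtain ⟨w, huw⟩ := Set.nonempty_of_ncard_ne_zero (s := G.neighborSet u)
    (by rw [hG.2 u]; omega)
  have hwv : w.isLeft = v.isLeft := by
    have := hG.isLeft_ne_of_adj huw
    grind
  obtain ⟨z, hwz, hvz⟩ := hG.commonNeighbors_nonempty hk hwv
  let p : G.Walk u v := .cons huw (.cons hwz (.cons (G.adj_symm hvz) .nil))
  have hle : G.dist u v ≤ 3 := SimpleGraph.dist_le p
  have hlt : 1 < G.dist u v :=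
    p.reachable.one_lt_dist_of_ne_of_not_adj (fun huv => h (congrArg _ huv)) hnadj
  have hne : G.dist u v ≠ 2 := by
    intro hdist
    have hedist : G.edist u v = 2 := by rw [← p.reachable.coe_dist_eq_edist, hdist]; rfl
    obtain ⟨-, -, c, huc, hvc⟩ := SimpleGraph.edist_eq_two_iff.mp hedist
    have hcu := hG.isLeft_ne_of_adj huc
    have hcv := hG.isLeft_ne_of_adj hvc
    grind
  omega

open Classical in
lemma dist_eq (hG : IsRegBipartite n k G) (hk : n < 2 * k) (u v : Fin n ⊕ Fin n) :
    G.dist u v = if u = v then 0 else if u.isLeft = v.isLeft then 2 else if G.Adj u v then 1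
      else 3 := by
  split_ifs with huv hside hadj
  · rw [huv, SimpleGraph.dist_self]
  · exact hG.dist_eq_two hk hside huv
  · exact SimpleGraph.dist_eq_one_iff_adj.mpr hadj
  · exact hG.dist_eq_three hk hside hadj

lemma adj_iff_of_not_adj (hG : IsRegBipartite n (n - 2) G) {u b c w : Fin n ⊕ Fin n}
    (hb : ¬ G.Adj u b) (hc : ¬ G.Adj u c) (hbc : b ≠ c) (hbu : b.isLeft ≠ u.isLeft)
    (hcu : c.isLeft ≠ u.isLeft) (hwu : w.isLeft ≠ u.isLeft) :
    G.Adj u w ↔ w ≠ b ∧ w ≠ c := by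
  have hsub : G.neighborSet u ⊆ {w | w.isLeft ≠ u.isLeft} \ {b, c} := fun w hw =>
    ⟨hG.neighborSet_subset u hw, by rintro (rfl | rfl) <;> contradiction⟩
  have hcard : ({w | w.isLeft ≠ u.isLeft} \ {b, c}).ncard ≤ (G.neighborSet u).ncard := by
    rw [Set.ncard_sdiff (by simp [Set.insert_subset_iff, hbu, hcu]), Set.ncard_pair hbc,
      ncard_setOf_isLeft_ne, hG.2 u]
  rw [← SimpleGraph.mem_neighborSet, Set.eq_of_subset_of_ncard_le hsub hcard]
  simp [hwu]

end IsRegBipartite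

lemma Set.exists_subset_pair_of_ncard_le_two {α : Type*} [Nonempty α] {s : Set α}
    (hs : s.Finite) (h : s.ncard ≤ 2) : ∃ a b, s ⊆ {a, b} := by
  rcases Nat.lt_or_eq_of_le h with h1 | h2
  · obtain ⟨a, ha⟩ := (Set.ncard_le_one_iff_subset_singleton hs).mp (by omega)
    exact ⟨a, a, by simpa using ha⟩
  · obtain ⟨a, b, -, rfl⟩ := Set.ncard_eq_two.mp h2
    exact ⟨a, b, subset_rfl⟩

lemma cycVerts_eq_range {n m : ℕ} (x y : Fin m → Fin n) :
    cycVerts x y = Set.range (Sum.map x y) := by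
  ext v
  constructor
  · rintro (⟨i, rfl⟩ | ⟨i, rfl⟩)
    exacts [⟨.inl i, rfl⟩, ⟨.inr i, rfl⟩]
  · rintro ⟨i | i, rfl⟩
    exacts [Or.inl ⟨i, rfl⟩, Or.inr ⟨i, rfl⟩]

/-- The distance table of `K_{4,4} \ E(C₈)`; by `IsRemovedCycle.dist_map` these are also the
distances of its vertices inside `G`. -/
def c8ComplDist : Fin 4 ⊕ Fin 4 → Fin 4 ⊕ Fin 4 → ℕ
  | .inl i, .inl j | .inr i, .inr j => if i = j then 0 else 2
  | .inl i, .inr j | .inr j, .inl i =>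
    if j ≠ i ∧ (i : ℕ) ≠ ((j : ℕ) + 1) % 4 then 1 else 3

lemma c8ComplDist_resolves_x012 : ∀ p q : Fin 4 ⊕ Fin 4,
    c8ComplDist p (.inl 0) = c8ComplDist q (.inl 0) →
    c8ComplDist p (.inl 1) = c8ComplDist q (.inl 1) →
    c8ComplDist p (.inl 2) = c8ComplDist q (.inl 2) → p = q := by
  decide

lemma exists_ne_c8ComplDist_eq_eq : ∀ a b : Fin 4 ⊕ Fin 4, ∃ p q : Fin 4 ⊕ Fin 4,
    p ≠ q ∧ p.isLeft = q.isLeft ∧ c8ComplDist p a = c8ComplDist q a ∧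
      c8ComplDist p b = c8ComplDist q b := by
  decide

namespace IsRemovedCycle

variable {n : ℕ} {G : SimpleGraph (Fin n ⊕ Fin n)} {x y : Fin 4 → Fin n}

lemma dist_map (hn : 5 ≤ n) (hreg : IsRegBipartite n (n - 2) G) (hcyc : IsRemovedCycle G 4 x y)
    (p q : Fin 4 ⊕ Fin 4) : G.dist (Sum.map x y p) (Sum.map x y q) = c8ComplDist p q := by
  rw [hreg.dist_eq (by omega)]
  rcases p with i | i <;> rcases q with j | j <;>
    simp [c8ComplDist, hcyc.1.eq_iff, hcyc.2.1.eq_iff, hcyc.2.2, G.adj_comm (.inr _)]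

lemma adj_map_of_notMem_cycVerts (hreg : IsRegBipartite n (n - 2) G)
    (hcyc : IsRemovedCycle G 4 x y) (p : Fin 4 ⊕ Fin 4) {w : Fin n ⊕ Fin n}
    (hw : w ∉ cycVerts x y) (hside : w.isLeft ≠ p.isLeft) : G.Adj (Sum.map x y p) w := by
  obtain ⟨hx, hy, hadj⟩ := hcyc
  rcases p with i | j
  · refine (hreg.adj_iff_of_not_adj (b := .inr (y i)) (c := .inr (y (i + 3))) ?_ ?_ ?_
      (by simp) (by simp) (by simpa using hside)).mpr
      ⟨fun h => hw (Or.inr ⟨_, h⟩), fun h => hw (Or.inr ⟨_, h⟩)⟩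
    all_goals simp only [Sum.map_inl, hadj, ne_eq, Sum.inr.injEq, hy.eq_iff]
    all_goals fin_cases i <;> decide
  · refine (hreg.adj_iff_of_not_adj (b := .inl (x j)) (c := .inl (x (j + 1))) ?_ ?_ ?_
      (by simp) (by simp) (by simpa using hside)).mpr
      ⟨fun h => hw (Or.inl ⟨_, h⟩), fun h => hw (Or.inl ⟨_, h⟩)⟩
    all_goals
      simp only [Sum.map_inr, G.adj_comm (.inr _), hadj, ne_eq, Sum.inl.injEq, hx.eq_iff]
    all_goals fin_cases j <;> decide

lemma dist_map_eq_of_notMem_cycVerts (hn : 5 ≤ n) (hreg : IsRegBipartite n (n - 2) G)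
    (hcyc : IsRemovedCycle G 4 x y) {p q : Fin 4 ⊕ Fin 4} (hpq : p.isLeft = q.isLeft)
    {w : Fin n ⊕ Fin n} (hw : w ∉ cycVerts x y) :
    G.dist (Sum.map x y p) w = G.dist (Sum.map x y q) w := by
  have hne : ∀ r, Sum.map x y r ≠ w :=
    fun r h => hw (h ▸ cycVerts_eq_range x y ▸ ⟨r, rfl⟩)
  rw [hreg.dist_eq (by omega), hreg.dist_eq (by omega)]
  by_cases hside : w.isLeft = q.isLeft
  · simp [hne, hpq, hside]
  · simp [hne, hpq, hside, Ne.symm hside, hcyc.adj_map_of_notMem_cycVerts hreg _ hw]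

lemma exists_ne_dist_map_eq_of_ncard_le_two (hn : 5 ≤ n) (hreg : IsRegBipartite n (n - 2) G)
    (hcyc : IsRemovedCycle G 4 x y) {S : Set (Fin n ⊕ Fin n)} (hS : S ⊆ cycVerts x y)
    (hcard : S.ncard ≤ 2) : ∃ p q : Fin 4 ⊕ Fin 4, p ≠ q ∧ p.isLeft = q.isLeft ∧
      ∀ w ∈ S, G.dist (Sum.map x y p) w = G.dist (Sum.map x y q) w := by
  have hinj : Function.Injective (Sum.map x y) := hcyc.1.sumMap hcyc.2.1
  obtain ⟨a, b, hab⟩ : ∃ a b, Sum.map x y ⁻¹' S ⊆ {a, b} := by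
    refine Set.exists_subset_pair_of_ncard_le_two (Set.toFinite _) ?_
    rwa [Set.ncard_preimage_of_injective_subset_range hinj (cycVerts_eq_range x y ▸ hS)]
  obtain ⟨p, q, hpq, hside, ha, hb⟩ := exists_ne_c8ComplDist_eq_eq a b
  refine ⟨p, q, hpq, hside, fun w hw => ?_⟩
  obtain ⟨r, rfl⟩ := cycVerts_eq_range x y ▸ hS hw
  rcases hab (Set.mem_preimage.mpr hw) with rfl | rfl
  · simpa only [hcyc.dist_map hn hreg] using ha
  · simpa only [hcyc.dist_map hn hreg] using hb

lemma resolvesWithin_x012 (hn : 5 ≤ n) (hreg : IsRegBipartite n (n - 2) G)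
    (hcyc : IsRemovedCycle G 4 x y) :
    ResolvesWithin G (cycVerts x y) {Sum.inl (x 0), Sum.inl (x 1), Sum.inl (x 2)} := by
  rw [cycVerts_eq_range]
  rintro _ ⟨p, rfl⟩ _ ⟨q, rfl⟩ hdist
  simp only [Set.mem_insert_iff, Set.mem_singleton_iff, forall_eq_or_imp, forall_eq] at hdist
  obtain ⟨h0, h1, h2⟩ := hdist
  refine congrArg _ (c8ComplDist_resolves_x012 p q ?_ ?_ ?_) <;>
    rw [← hcyc.dist_map hn hreg, ← hcyc.dist_map hn hreg] <;> assumption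

lemma not_resolvesWithin_of_ncard_le_two (hn : 5 ≤ n) (hreg : IsRegBipartite n (n - 2) G)
    (hcyc : IsRemovedCycle G 4 x y) {S : Set (Fin n ⊕ Fin n)} (hS : S ⊆ cycVerts x y)
    (hcard : S.ncard ≤ 2) : ¬ ResolvesWithin G (cycVerts x y) S := by
  obtain ⟨p, q, hpq, -, hdist⟩ := hcyc.exists_ne_dist_map_eq_of_ncard_le_two hn hreg hS hcard
  rw [ResolvesWithin, cycVerts_eq_range]
  exact fun hres => hpq (hcyc.1.sumMap hcyc.2.1 (hres _ ⟨p, rfl⟩ _ ⟨q, rfl⟩ hdist))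

lemma three_le_ncard_inter_of_resolves (hn : 5 ≤ n) (hreg : IsRegBipartite n (n - 2) G)
    (hcyc : IsRemovedCycle G 4 x y) {W : Set (Fin n ⊕ Fin n)} (hW : Resolves G W) :
    3 ≤ (W ∩ cycVerts x y).ncard := by
  by_contra! hlt
  obtain ⟨p, q, hpq, hside, hdist⟩ := hcyc.exists_ne_dist_map_eq_of_ncard_le_two hn hreg
    Set.inter_subset_right (Nat.le_of_lt_succ hlt)
  refine hpq (hcyc.1.sumMap hcyc.2.1 (hW _ _ fun w hw => ?_))
  by_cases hwc : w ∈ cycVerts x y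
  · exact hdist w ⟨hw, hwc⟩
  · exact hcyc.dist_map_eq_of_notMem_cycVerts hn hreg hside hwc

end IsRemovedCycle

/-- for `n ≥ 5`, let `G` be an `(n-2)`-regular bipartite graph
`G(n,n)` containing the subgraph `G' = K_{4,4} \ E(C₈)` on one of the removed
cycles (distances taken in `G`). Then the minimum number of vertices of `G'` in
any resolving set of `G` is `3`: the set `{x₁, x₂, x₃}` resolves `V(G')` in `G`,
no `2`-subset of `V(G')` does, and every resolving set of `G` meets `V(G')` in
at least `3` vertices. -/
theorem stmt15 (n : ℕ) (hn : 5 ≤ n)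
    (G : SimpleGraph (Fin n ⊕ Fin n)) (hreg : IsRegBipartite n (n - 2) G)
    (x y : Fin 4 → Fin n) (hcyc : IsRemovedCycle G 4 x y) :
    (∀ W : Set (Fin n ⊕ Fin n), Resolves G W → 3 ≤ (W ∩ cycVerts x y).ncard) ∧
    ResolvesWithin G (cycVerts x y)
      {Sum.inl (x 0), Sum.inl (x 1), Sum.inl (x 2)} ∧
    (∀ S ⊆ cycVerts x y, S.ncard ≤ 2 → ¬ ResolvesWithin G (cycVerts x y) S) :=
  ⟨fun _ hW => hcyc.three_le_ncard_inter_of_resolves hn hreg hW,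
    hcyc.resolvesWithin_x012 hn hreg,
    fun _ hS hcard => hcyc.not_resolvesWithin_of_ncard_le_two hn hreg hS hcard⟩
end
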